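/- arXiv:math/9201284 — 2 statements merged into one kernel-verified Lean document; each statement's English description precedes it below -/
import Mathlib

section
/- Let φ : Σ_A → ℝ be Hölder. Then there exist Hölder functions u, φ⁺ : Σ_A → ℝ such that φ⁺ = φ + u∘σ − u, and φ⁺ depends only on the forward coordinates: φ⁺(x) = φ⁺(y) whenever x i = y i for all i ≥ 0. -/
/-!
Sinai's construction. Let `x*` agree with `x` at all `i ≥ 0` and carry a past chosen once and for
all for each value of `x 0`, and put `u x = ∑ₙ (φ (σⁿ x) - φ (σⁿ x*))`. Since `σⁿ x` and `σⁿ x*`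
agree at all `i ≥ -n`, the `n`-th term is `O(2^(-αn))`; since `d(σⁿ x, σⁿ y) ≤ 2ⁿ d(x, y)` and
`d(x*, y*) ≤ 3 d(x, y)`, the `n`-th term of `u x - u y` is also `O(2^(αn) d(x, y)^α)`.
Interpolating between the two bounds makes `u` Hölder of exponent `α / 4`. If `x` and `y` have
the same future then `x* = y*`, so `u x - u y = ∑ₙ (φ (σⁿ x) - φ (σⁿ y))`, which telescopes
against `u (σ x) - u (σ y)` to give `φ⁺ x = φ⁺ y`.
-/

open Real

variable {r : ℕ}

/-- The two-sided subshift of finite type determined by the transition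
matrix `A`. -/
abbrev TwoSided (A : Fin r → Fin r → Prop) : Type :=
  {x : ℤ → Fin r // ∀ i, A (x i) (x (i + 1))}

/-- The shift homeomorphism `σ` on the two-sided subshift. -/
def shift2 {A : Fin r → Fin r → Prop} (x : TwoSided A) : TwoSided A :=
  ⟨fun i => x.1 (i + 1), fun i => x.2 (i + 1)⟩

/-- The metric `d(x,y) = ∑_{i ∈ ℤ, x i ≠ y i} 2^{-|i|}` on the two-sided
subshift. -/
noncomputable def dist2 {A : Fin r → Fin r → Prop} (x y : TwoSided A) : ℝ :=
  ∑' i : ℤ, if x.1 i ≠ y.1 i then (2 : ℝ) ^ (-|i|) else 0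

/-- `ψ` is Hölder with respect to the distance function `d`. -/
def IsHolderWrt {X : Type*} (d : X → X → ℝ) (ψ : X → ℝ) : Prop :=
  ∃ C > 0, ∃ α ∈ Set.Ioc (0 : ℝ) 1, ∀ x y, |ψ x - ψ y| ≤ C * d x y ^ α

def HolderWithWrt {X : Type*} (d : X → X → ℝ) (C α : ℝ) (ψ : X → ℝ) : Prop :=
  ∀ x y, |ψ x - ψ y| ≤ C * d x y ^ α

namespace HolderWithWrt

variable {X : Type*} {d : X → X → ℝ} {C C' α : ℝ} {f g : X → ℝ}

lemma add (hf : HolderWithWrt d C α f) (hg : HolderWithWrt d C' α g) :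
    HolderWithWrt d (C + C') α (f + g) := fun x y =>
  calc |(f + g) x - (f + g) y| = |(f x - f y) + (g x - g y)| := by
        simp only [Pi.add_apply]; ring_nf
    _ ≤ |f x - f y| + |g x - g y| := abs_add_le _ _
    _ ≤ (C + C') * d x y ^ α := by linarith [hf x y, hg x y]

lemma sub (hf : HolderWithWrt d C α f) (hg : HolderWithWrt d C' α g) :
    HolderWithWrt d (C + C') α (f - g) := fun x y =>
  calc |(f - g) x - (f - g) y| = |(f x - f y) - (g x - g y)| := by
        simp only [Pi.sub_apply]; ring_nf
    _ ≤ |f x - f y| + |g x - g y| := abs_sub _ _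
    _ ≤ (C + C') * d x y ^ α := by linarith [hf x y, hg x y]

lemma comp_of_dist_le {T : X → X} {L : ℝ} (hf : HolderWithWrt d C α f) (hC : 0 ≤ C)
    (hα : 0 ≤ α) (hL : 0 ≤ L) (hd : ∀ x y, 0 ≤ d x y) (hT : ∀ x y, d (T x) (T y) ≤ L * d x y) :
    HolderWithWrt d (C * L ^ α) α (f ∘ T) := fun x y =>
  calc |f (T x) - f (T y)| ≤ C * d (T x) (T y) ^ α := hf _ _
    _ ≤ C * (L * d x y) ^ α := by gcongr; exacts [hd _ _, hT x y]
    _ = C * L ^ α * d x y ^ α := by rw [Real.mul_rpow hL (hd x y), mul_assoc]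

lemma of_exponent_le {D β : ℝ} (hf : HolderWithWrt d C α f) (hC : 0 ≤ C)
    (hd : ∀ x y, 0 ≤ d x y) (hD : ∀ x y, d x y ≤ D) (hβ : 0 ≤ β) (hβα : β ≤ α) :
    HolderWithWrt d (C * D ^ (α - β)) β f := fun x y =>
  calc |f x - f y| ≤ C * d x y ^ α := hf x y
    _ = C * (d x y ^ (α - β) * d x y ^ β) := by
      rw [← Real.rpow_add_of_nonneg (hd x y) (by linarith) hβ, sub_add_cancel]
    _ ≤ C * (D ^ (α - β) * d x y ^ β) := by
      have := hd x y
      gcongr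
      exact hD x y
    _ = C * D ^ (α - β) * d x y ^ β := by ring

end HolderWithWrt

/-- `a = a ^ (3/4) * a ^ (1/4) ≤ (K * b ^ 2) ^ (3/4) * (K * e ^ 4 / b ^ 2) ^ (1/4)`, phrased with
integer powers. -/
lemma le_mul_mul_of_le_mul_sq_of_mul_sq_le {a b e K : ℝ} (ha : 0 ≤ a) (hb : 0 < b)
    (he : 0 ≤ e) (h₁ : a ≤ K * b ^ 2) (h₂ : a * b ^ 2 ≤ K * e ^ 4) : a ≤ K * b * e := by
  have hK : 0 ≤ K := nonneg_of_mul_nonneg_left (ha.trans h₁) (by positivity)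
  have h₄ : a ^ 4 * b ^ 2 ≤ (K * b * e) ^ 4 * b ^ 2 :=
    calc a ^ 4 * b ^ 2 = a ^ 3 * (a * b ^ 2) := by ring
      _ ≤ (K * b ^ 2) ^ 3 * (K * e ^ 4) := by gcongr
      _ = (K * b * e) ^ 4 * b ^ 2 := by ring
  exact (pow_le_pow_iff_left₀ ha (by positivity) four_ne_zero).1
    (le_of_mul_le_mul_right h₄ (by positivity))

lemma two_inv_rpow_lt_one {α : ℝ} (hα : 0 < α) : (2⁻¹ : ℝ) ^ α < 1 :=
  Real.rpow_lt_one (by norm_num) (by norm_num) hα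

lemma summable_of_abs_le_geometric {g : ℕ → ℝ} {C θ : ℝ} (hθ0 : 0 ≤ θ) (hθ1 : θ < 1)
    (hg : ∀ n, |g n| ≤ C * θ ^ n) : Summable g :=
  .of_norm_bounded ((summable_geometric_of_lt_one hθ0 hθ1).mul_left C) hg

section

variable {A : Fin r → Fin r → Prop}

noncomputable def mismatchWeight (x y : TwoSided A) (i : ℤ) : ℝ :=
  if x.1 i ≠ y.1 i then (2 : ℝ) ^ (-|i|) else 0

lemma dist2_eq_tsum_mismatchWeight (x y : TwoSided A) :
    dist2 x y = ∑' i, mismatchWeight x y i := rfl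

lemma mismatchWeight_nonneg (x y : TwoSided A) (i : ℤ) : 0 ≤ mismatchWeight x y i := by
  unfold mismatchWeight; split_ifs <;> positivity

lemma mismatchWeight_of_eq {x y : TwoSided A} {i : ℤ} (h : x.1 i = y.1 i) :
    mismatchWeight x y i = 0 := by
  simp [mismatchWeight, h]

lemma mismatchWeight_le (x y : TwoSided A) (i : ℤ) :
    mismatchWeight x y i ≤ (2 : ℝ)⁻¹ ^ i.natAbs := by
  have h : (2 : ℝ) ^ (-|i|) = 2⁻¹ ^ i.natAbs := by
    rw [Int.abs_eq_natAbs, zpow_neg, zpow_natCast, inv_pow]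
  unfold mismatchWeight; split_ifs <;> simp [h]

lemma mismatchWeight_neg_le (x y : TwoSided A) (n : ℕ) :
    mismatchWeight x y (-(n + 1)) ≤ 2⁻¹ * (2 : ℝ)⁻¹ ^ n := by
  have h : (-((n : ℤ) + 1)).natAbs = n + 1 := by omega
  have := mismatchWeight_le x y (-(n + 1))
  rwa [h, pow_succ, mul_comm] at this

lemma summable_mismatchWeight_nat (x y : TwoSided A) :
    Summable fun n : ℕ => mismatchWeight x y n :=
  .of_nonneg_of_le (fun _ => mismatchWeight_nonneg ..)
    (fun n => by simpa using mismatchWeight_le x y n) summable_geometric_two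

lemma summable_mismatchWeight_neg (x y : TwoSided A) :
    Summable fun n : ℕ => mismatchWeight x y (-(n + 1)) :=
  .of_nonneg_of_le (fun _ => mismatchWeight_nonneg ..)
    (fun n => (mismatchWeight_neg_le x y n).trans
      (by rw [one_div]; exact mul_le_of_le_one_left (by positivity) (by norm_num)))
    summable_geometric_two

lemma summable_mismatchWeight (x y : TwoSided A) : Summable (mismatchWeight x y) :=
  .of_nat_of_neg_add_one (summable_mismatchWeight_nat x y) (summable_mismatchWeight_neg x y)

lemma dist2_eq_tsum_nat_add_tsum_neg (x y : TwoSided A) :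
    dist2 x y = ∑' n : ℕ, mismatchWeight x y n + ∑' n : ℕ, mismatchWeight x y (-(n + 1)) :=
  tsum_of_nat_of_neg_add_one (summable_mismatchWeight_nat x y) (summable_mismatchWeight_neg x y)

lemma dist2_nonneg (x y : TwoSided A) : 0 ≤ dist2 x y :=
  tsum_nonneg (mismatchWeight_nonneg x y)

lemma dist2_le_three (x y : TwoSided A) : dist2 x y ≤ 3 := by
  have hgeom := summable_geometric_of_lt_one (r := (2 : ℝ)⁻¹) (by norm_num) (by norm_num)
  have hnat : ∑' n : ℕ, mismatchWeight x y n ≤ 2 :=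
    ((summable_mismatchWeight_nat x y).tsum_le_tsum
      (fun n => by simpa using mismatchWeight_le x y n) hgeom).trans_eq tsum_geometric_inv_two
  have hneg : ∑' n : ℕ, mismatchWeight x y (-(n + 1)) ≤ 2⁻¹ * 2 :=
    ((summable_mismatchWeight_neg x y).tsum_le_tsum (mismatchWeight_neg_le x y)
      (hgeom.mul_left _)).trans_eq (by rw [tsum_mul_left, tsum_geometric_inv_two])
  rw [dist2_eq_tsum_nat_add_tsum_neg]; linarith

lemma one_le_dist2 {x y : TwoSided A} (h : x.1 0 ≠ y.1 0) : 1 ≤ dist2 x y := by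
  have := (summable_mismatchWeight x y).le_tsum 0 (fun i _ => mismatchWeight_nonneg x y i)
  simpa [dist2_eq_tsum_mismatchWeight, mismatchWeight, h] using this

lemma dist2_le_of_forall_ge_neg_eq {x y : TwoSided A} (n : ℕ)
    (h : ∀ i : ℤ, -n ≤ i → x.1 i = y.1 i) : dist2 x y ≤ 2⁻¹ ^ n := by
  have hneg (k : ℕ) : mismatchWeight x y (-(k + 1)) ≤ 2⁻¹ * ite (n ≤ k) (2⁻¹ ^ k) 0 := by
    split_ifs with hk
    · exact mismatchWeight_neg_le x y k
    · rw [mismatchWeight_of_eq (h _ (by omega)), mul_zero]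
  have hsum : Summable fun k : ℕ => ite (n ≤ k) ((2 : ℝ)⁻¹ ^ k) 0 :=
    .of_nonneg_of_le (fun k => by split_ifs <;> positivity) (fun k => by split_ifs <;> simp)
      (summable_geometric_of_lt_one (r := (2 : ℝ)⁻¹) (by norm_num) (by norm_num))
  calc dist2 x y = ∑' k : ℕ, mismatchWeight x y (-(k + 1)) := by
        rw [dist2_eq_tsum_nat_add_tsum_neg,
          tsum_congr fun k : ℕ => mismatchWeight_of_eq (h k (by omega)), tsum_zero, zero_add]
    _ ≤ ∑' k : ℕ, 2⁻¹ * ite (n ≤ k) ((2 : ℝ)⁻¹ ^ k) 0 :=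
        (summable_mismatchWeight_neg x y).tsum_le_tsum hneg (hsum.mul_left _)
    _ = 2⁻¹ ^ n := by rw [tsum_mul_left, tsum_geometric_inv_two_ge]; ring

lemma dist2_le_of_mismatch_subset {x y x' y' : TwoSided A}
    (h : ∀ i, x'.1 i ≠ y'.1 i → x.1 i ≠ y.1 i) : dist2 x' y' ≤ dist2 x y := by
  rw [dist2_eq_tsum_mismatchWeight, dist2_eq_tsum_mismatchWeight]
  refine (summable_mismatchWeight x' y').tsum_le_tsum (fun i => ?_) (summable_mismatchWeight x y)
  by_cases hi : x'.1 i = y'.1 i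
  · rw [mismatchWeight_of_eq hi]; exact mismatchWeight_nonneg x y i
  · simp [mismatchWeight, hi, h i hi]

lemma iterate_shift2_apply (n : ℕ) (x : TwoSided A) (i : ℤ) :
    (shift2^[n] x).1 i = x.1 (i + n) := by
  induction n generalizing x with
  | zero => simp
  | succ n ih =>
    rw [Function.iterate_succ_apply, ih, Nat.cast_succ, ← add_assoc]
    rfl

lemma mismatchWeight_shift2_le (x y : TwoSided A) (i : ℤ) :
    mismatchWeight (shift2 x) (shift2 y) i ≤ 2 * mismatchWeight x y (i + 1) := by
  by_cases h : x.1 (i + 1) = y.1 (i + 1)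
  · rw [mismatchWeight_of_eq (x := shift2 x) (y := shift2 y) h, mismatchWeight_of_eq h,
      mul_zero]
  · have hi : -|i| ≤ 1 + -|i + 1| := by
      have := abs_add_le i 1
      rw [abs_one] at this
      omega
    simp only [mismatchWeight, shift2, ne_eq, h, not_false_eq_true, if_true]
    rw [← zpow_one_add₀ two_ne_zero]
    exact zpow_le_zpow_right₀ one_le_two hi

lemma dist2_shift2_le (x y : TwoSided A) : dist2 (shift2 x) (shift2 y) ≤ 2 * dist2 x y := by
  have hreindex : dist2 x y = ∑' i, mismatchWeight x y (i + 1) :=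
    ((Equiv.addRight (1 : ℤ)).tsum_eq (mismatchWeight x y)).symm
  rw [hreindex, ← tsum_mul_left]
  exact (summable_mismatchWeight _ _).tsum_le_tsum (mismatchWeight_shift2_le x y)
    (((Equiv.addRight (1 : ℤ)).summable_iff.mpr (summable_mismatchWeight x y)).mul_left 2)

lemma dist2_iterate_shift2_le (n : ℕ) (x y : TwoSided A) :
    dist2 (shift2^[n] x) (shift2^[n] y) ≤ 2 ^ n * dist2 x y := by
  induction n with
  | zero => simp
  | succ n ih =>
    rw [Function.iterate_succ_apply', Function.iterate_succ_apply', pow_succ', mul_assoc]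
    exact (dist2_shift2_le _ _).trans (by gcongr)

lemma dist2_iterate_shift2_le_of_forall_nonneg_eq {x y : TwoSided A}
    (h : ∀ i, 0 ≤ i → x.1 i = y.1 i) (n : ℕ) :
    dist2 (shift2^[n] x) (shift2^[n] y) ≤ 2⁻¹ ^ n :=
  dist2_le_of_forall_ge_neg_eq n fun i hi => by
    rw [iterate_shift2_apply, iterate_shift2_apply]; exact h _ (by omega)

def splice (x z : TwoSided A) (h : x.1 0 = z.1 0) : TwoSided A :=
  ⟨fun i => if 0 ≤ i then x.1 i else z.1 i, fun i => by
    by_cases hi : 0 ≤ i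
    · simpa [hi, show 0 ≤ i + 1 by omega] using x.2 i
    · by_cases hi' : 0 ≤ i + 1
      · obtain rfl : i = -1 := by omega
        simpa [h] using z.2 (-1)
      · simpa [hi, hi'] using z.2 i⟩

lemma splice_apply_of_nonneg {x z : TwoSided A} (h : x.1 0 = z.1 0) {i : ℤ} (hi : 0 ≤ i) :
    (splice x z h).1 i = x.1 i := if_pos hi

lemma splice_apply_of_neg {x z : TwoSided A} (h : x.1 0 = z.1 0) {i : ℤ} (hi : i < 0) :
    (splice x z h).1 i = z.1 i := if_neg (by omega)

noncomputable def canonicalPast (x : TwoSided A) : TwoSided A :=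
  (⟨x, rfl⟩ : ∃ z : TwoSided A, z.1 0 = x.1 0).choose

lemma canonicalPast_apply_zero (x : TwoSided A) : (canonicalPast x).1 0 = x.1 0 :=
  (⟨x, rfl⟩ : ∃ z : TwoSided A, z.1 0 = x.1 0).choose_spec

lemma canonicalPast_congr {x y : TwoSided A} (h : x.1 0 = y.1 0) :
    canonicalPast x = canonicalPast y := by
  unfold canonicalPast
  congr 2
  exact funext fun z => by rw [h]

noncomputable def withCanonicalPast (x : TwoSided A) : TwoSided A :=
  splice x (canonicalPast x) (canonicalPast_apply_zero x).symm

lemma withCanonicalPast_apply_of_nonneg (x : TwoSided A) {i : ℤ} (hi : 0 ≤ i) :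
    (withCanonicalPast x).1 i = x.1 i :=
  splice_apply_of_nonneg _ hi

lemma withCanonicalPast_apply_of_neg {x y : TwoSided A} (h : x.1 0 = y.1 0) {i : ℤ}
    (hi : i < 0) : (withCanonicalPast x).1 i = (withCanonicalPast y).1 i := by
  simp only [withCanonicalPast, splice_apply_of_neg _ hi, canonicalPast_congr h]

lemma withCanonicalPast_eq {x y : TwoSided A} (h : ∀ i, 0 ≤ i → x.1 i = y.1 i) :
    withCanonicalPast x = withCanonicalPast y := by
  refine Subtype.ext (funext fun i => ?_)
  rcases le_or_gt 0 i with hi | hi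
  · rw [withCanonicalPast_apply_of_nonneg x hi, withCanonicalPast_apply_of_nonneg y hi, h i hi]
  · exact withCanonicalPast_apply_of_neg (h 0 le_rfl) hi

lemma dist2_withCanonicalPast_le (x y : TwoSided A) :
    dist2 (withCanonicalPast x) (withCanonicalPast y) ≤ 3 * dist2 x y := by
  by_cases h0 : x.1 0 = y.1 0
  · have hsub : ∀ i, (withCanonicalPast x).1 i ≠ (withCanonicalPast y).1 i → x.1 i ≠ y.1 i := by
      intro i hne
      rcases le_or_gt 0 i with hi | hi
      · rwa [withCanonicalPast_apply_of_nonneg x hi, withCanonicalPast_apply_of_nonneg y hi] at hne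
      · exact absurd (withCanonicalPast_apply_of_neg h0 hi) hne
    linarith [dist2_le_of_mismatch_subset hsub, dist2_nonneg x y]
  · linarith [dist2_le_three (withCanonicalPast x) (withCanonicalPast y), one_le_dist2 h0]

section Transfer

variable (φ : TwoSided A → ℝ)

noncomputable def transferTerm (x : TwoSided A) (n : ℕ) : ℝ :=
  φ (shift2^[n] x) - φ (shift2^[n] (withCanonicalPast x))

noncomputable def transfer (x : TwoSided A) : ℝ := ∑' n, transferTerm φ x n

variable {φ} {C α : ℝ}

lemma abs_sub_iterate_le_of_forall_nonneg_eq (hφ : HolderWithWrt dist2 C α φ) (hC : 0 ≤ C)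
    (hα : 0 ≤ α) {x y : TwoSided A} (h : ∀ i, 0 ≤ i → x.1 i = y.1 i) (n : ℕ) :
    |φ (shift2^[n] x) - φ (shift2^[n] y)| ≤ C * (2⁻¹ ^ α) ^ n :=
  calc |φ (shift2^[n] x) - φ (shift2^[n] y)| ≤ C * dist2 (shift2^[n] x) (shift2^[n] y) ^ α :=
        hφ _ _
    _ ≤ C * (2⁻¹ ^ n) ^ α := by
        gcongr
        exacts [dist2_nonneg _ _, dist2_iterate_shift2_le_of_forall_nonneg_eq h n]
    _ = C * (2⁻¹ ^ α) ^ n := by rw [Real.rpow_pow_comm (by norm_num)]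

lemma abs_transferTerm_le (hφ : HolderWithWrt dist2 C α φ) (hC : 0 ≤ C) (hα : 0 ≤ α)
    (x : TwoSided A) (n : ℕ) : |transferTerm φ x n| ≤ C * (2⁻¹ ^ α) ^ n :=
  abs_sub_iterate_le_of_forall_nonneg_eq hφ hC hα
    (fun _ hi => (withCanonicalPast_apply_of_nonneg x hi).symm) n

lemma abs_transferTerm_sub_mul_le (hφ : HolderWithWrt dist2 C α φ) (hC : 0 ≤ C) (hα : 0 ≤ α)
    (x y : TwoSided A) (n : ℕ) :
    |transferTerm φ x n - transferTerm φ y n| * (2⁻¹ ^ α) ^ n ≤ 2 * C * (3 * dist2 x y) ^ α := by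
  have hd := dist2_nonneg x y
  have key (x' y' : TwoSided A) (h : dist2 x' y' ≤ 3 * dist2 x y) :
      |φ (shift2^[n] x') - φ (shift2^[n] y')| * (2⁻¹ ^ α) ^ n ≤ C * (3 * dist2 x y) ^ α :=
    calc |φ (shift2^[n] x') - φ (shift2^[n] y')| * (2⁻¹ ^ α) ^ n
        ≤ C * dist2 (shift2^[n] x') (shift2^[n] y') ^ α * (2⁻¹ ^ n) ^ α := by
          rw [← Real.rpow_pow_comm (by norm_num)]; gcongr; exact hφ _ _
      _ ≤ C * (2 ^ n * (3 * dist2 x y)) ^ α * (2⁻¹ ^ n) ^ α := by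
          gcongr
          · exact dist2_nonneg _ _
          · exact (dist2_iterate_shift2_le n x' y').trans (by gcongr)
      _ = C * (3 * dist2 x y) ^ α := by
          rw [mul_assoc, ← Real.mul_rpow (by positivity) (by positivity), inv_pow,
            mul_comm (2 ^ n : ℝ), mul_assoc, mul_inv_cancel₀ (by positivity), mul_one]
  have hsplit : |transferTerm φ x n - transferTerm φ y n| ≤ |φ (shift2^[n] x) - φ (shift2^[n] y)|
      + |φ (shift2^[n] (withCanonicalPast x)) - φ (shift2^[n] (withCanonicalPast y))| := by
    rw [transferTerm, transferTerm, show ∀ a b c d : ℝ, a - b - (c - d) = (a - c) - (b - d) by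
      intros; ring]
    exact abs_sub _ _
  calc |transferTerm φ x n - transferTerm φ y n| * (2⁻¹ ^ α) ^ n
      ≤ (|φ (shift2^[n] x) - φ (shift2^[n] y)|
        + |φ (shift2^[n] (withCanonicalPast x)) - φ (shift2^[n] (withCanonicalPast y))|)
          * (2⁻¹ ^ α) ^ n := by gcongr
    _ ≤ 2 * C * (3 * dist2 x y) ^ α := by
      linarith [key x y (by linarith), key _ _ (dist2_withCanonicalPast_le x y)]

lemma summable_transferTerm (hφ : HolderWithWrt dist2 C α φ) (hC : 0 ≤ C) (hα : 0 < α)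
    (x : TwoSided A) : Summable (transferTerm φ x) :=
  summable_of_abs_le_geometric (by positivity) (two_inv_rpow_lt_one hα)
    (abs_transferTerm_le hφ hC hα.le x)

lemma exists_holderWithWrt_transfer (hφ : HolderWithWrt dist2 C α φ) (hC : 0 < C) (hα : 0 < α) :
    ∃ K > 0, HolderWithWrt dist2 K (α / 4) (transfer φ) := by
  set η : ℝ := 2⁻¹ ^ (α / 2) with hη_def
  have hη0 : 0 < η := by positivity
  have hη1 : η < 1 := two_inv_rpow_lt_one (half_pos hα)
  have hη_sq (n : ℕ) : (η ^ n) ^ 2 = (2⁻¹ ^ α) ^ n := by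
    rw [← pow_mul, mul_comm, pow_mul]
    congr 1
    rw [hη_def, ← Real.rpow_natCast, ← Real.rpow_mul (by norm_num)]
    norm_num
  refine ⟨2 * C * 3 ^ (α / 4) * (1 - η)⁻¹, by have := sub_pos.2 hη1; positivity, fun x y => ?_⟩
  have hd := dist2_nonneg x y
  set e := (3 * dist2 x y) ^ (α / 4) with he_def
  have he : e ^ 4 = (3 * dist2 x y) ^ α := by
    rw [← Real.rpow_natCast, ← Real.rpow_mul (by positivity)]; norm_num
  have hterm (n : ℕ) : ‖transferTerm φ x n - transferTerm φ y n‖ ≤ 2 * C * e * η ^ n := by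
    rw [Real.norm_eq_abs, mul_right_comm]
    refine le_mul_mul_of_le_mul_sq_of_mul_sq_le (abs_nonneg _) (by positivity) (by positivity)
      ?_ ?_ <;> rw [hη_sq]
    · linarith [abs_sub (transferTerm φ x n) (transferTerm φ y n),
        abs_transferTerm_le hφ hC.le hα.le x n, abs_transferTerm_le hφ hC.le hα.le y n]
    · rw [he]; exact abs_transferTerm_sub_mul_le hφ hC.le hα.le x y n
  calc |transfer φ x - transfer φ y|
      = ‖∑' n, (transferTerm φ x n - transferTerm φ y n)‖ := by
        rw [transfer, transfer, (summable_transferTerm hφ hC.le hα x).tsum_sub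
          (summable_transferTerm hφ hC.le hα y), Real.norm_eq_abs]
    _ ≤ 2 * C * e * (1 - η)⁻¹ :=
        tsum_of_norm_bounded ((hasSum_geometric_of_lt_one hη0.le hη1).mul_left _) hterm
    _ = 2 * C * 3 ^ (α / 4) * (1 - η)⁻¹ * dist2 x y ^ (α / 4) := by
        rw [he_def, Real.mul_rpow (by norm_num) hd]; ring

lemma transfer_sub_transfer_of_forall_nonneg_eq (hφ : HolderWithWrt dist2 C α φ) (hC : 0 ≤ C)
    (hα : 0 < α) {x y : TwoSided A} (h : ∀ i, 0 ≤ i → x.1 i = y.1 i) :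
    transfer φ x - transfer φ y = ∑' n, (φ (shift2^[n] x) - φ (shift2^[n] y)) := by
  rw [transfer, transfer, ← (summable_transferTerm hφ hC hα x).tsum_sub
    (summable_transferTerm hφ hC hα y)]
  congr 1 with n
  rw [transferTerm, transferTerm, withCanonicalPast_eq h]
  ring

lemma coboundary_eq_of_forall_nonneg_eq (hφ : HolderWithWrt dist2 C α φ) (hC : 0 ≤ C)
    (hα : 0 < α) {x y : TwoSided A} (h : ∀ i, 0 ≤ i → x.1 i = y.1 i) :
    φ x + transfer φ (shift2 x) - transfer φ x = φ y + transfer φ (shift2 y) - transfer φ y := by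
  have hsum : Summable fun n => φ (shift2^[n] x) - φ (shift2^[n] y) :=
    summable_of_abs_le_geometric (by positivity) (two_inv_rpow_lt_one hα)
      (abs_sub_iterate_le_of_forall_nonneg_eq hφ hC hα.le h)
  have hshift := transfer_sub_transfer_of_forall_nonneg_eq hφ hC hα
    (x := shift2 x) (y := shift2 y) fun i hi => h (i + 1) (by omega)
  simp only [← Function.iterate_succ_apply] at hshift
  have hpeel := hsum.tsum_eq_zero_add
  simp only [Function.iterate_zero, id] at hpeel
  linarith [transfer_sub_transfer_of_forall_nonneg_eq hφ hC hα h]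

end Transfer

end

/-- (Sinai–Bowen) A Hölder function `φ` on the two-sided subshift is
cohomologous, via a Hölder transfer function `u`, to a Hölder function `φ⁺`
depending only on the forward coordinates. -/
theorem holder_cohomologous_to_forward_dependent
    {A : Fin r → Fin r → Prop} (φ : TwoSided A → ℝ)
    (hφ : IsHolderWrt dist2 φ) :
    ∃ u φp : TwoSided A → ℝ,
      IsHolderWrt dist2 u ∧ IsHolderWrt dist2 φp ∧
      (∀ x, φp x = φ x + u (shift2 x) - u x) ∧
      (∀ x y : TwoSided A, (∀ i : ℤ, 0 ≤ i → x.1 i = y.1 i) → φp x = φp y) := by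
  obtain ⟨C, hC, α, ⟨hα, hα1⟩, hφ : HolderWithWrt dist2 C α φ⟩ := hφ
  obtain ⟨K, hK, hu⟩ := exists_holderWithWrt_transfer hφ hC hα
  have hβ : α / 4 ∈ Set.Ioc (0 : ℝ) 1 := ⟨by positivity, by linarith⟩
  have hφp := ((hφ.of_exponent_le hC.le dist2_nonneg dist2_le_three hβ.1.le (by linarith)).add
    (hu.comp_of_dist_le hK.le hβ.1.le zero_le_two dist2_nonneg dist2_shift2_le)).sub hu
  exact ⟨transfer φ, φ + transfer φ ∘ shift2 - transfer φ, ⟨K, hK, _, hβ, hu⟩,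
    ⟨_, by positivity, _, hβ, hφp⟩, fun _ => rfl,
    fun _ _ h => coboundary_eq_of_forall_nonneg_eq hφ hC.le hα h⟩
end

section
/- For every natural number n, every n-cylinder [v] and every (n+1)-cylinder [w] with [w] ⊆ [v] satisfy μ₀([w]) ≥ λ^{−(M+1)} · μ₀([v]) (bounded ratio geometry of the cylinder partitions). -/
open MeasureTheory Real
open scoped ENNReal

variable {r : ℕ}

/-- The one-sided subshift of finite type determined by the transition
matrix `A`. -/
abbrev OneSided (A : Fin r → Fin r → Prop) : Type :=
  {x : ℕ → Fin r // ∀ i, A (x i) (x (i + 1))}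

/-- The shift map `σ` on the one-sided subshift. -/
def shift1 {A : Fin r → Fin r → Prop} (x : OneSided A) : OneSided A :=
  ⟨fun i => x.1 (i + 1), fun i => x.2 (i + 1)⟩

/-- The metric `d(x,y) = ∑_{i ∈ ℕ, x i ≠ y i} 2^{-i}` on the one-sided
subshift. -/
noncomputable def dist1 {A : Fin r → Fin r → Prop} (x y : OneSided A) : ℝ :=
  ∑' i : ℕ, if x.1 i ≠ y.1 i then ((2 : ℝ)⁻¹) ^ i else 0

/-- A word `w : Fin n → Fin r` is admissible if `A (w i) (w (i+1))` for all
`i < n − 1`. -/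
def AdmissibleWord {n : ℕ} (A : Fin r → Fin r → Prop) (w : Fin n → Fin r) : Prop :=
  ∀ i : ℕ, ∀ h : i + 1 < n, A (w ⟨i, Nat.lt_of_succ_lt h⟩) (w ⟨i + 1, h⟩)

/-- The `n`-cylinder `[w]` of a word `w : Fin n → Fin r`. -/
def Cyl (A : Fin r → Fin r → Prop) {n : ℕ} (w : Fin n → Fin r) : Set (OneSided A) :=
  {x | ∀ i : Fin n, x.1 i = w i}

/-- `(P, μ)` is a conformal pair for `φ`: `μ` is a Borel probability measure
with `μ(σ '' E) = ∫_E exp(P − φ) dμ` for every Borel `E` contained in a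
1-cylinder.  This encodes `log(dμ(σx)/dμ(x)) = −φ(x) + P`. -/
def ConformalPair (A : Fin r → Fin r → Prop) (φ : OneSided A → ℝ) (P : ℝ)
    (μ : Measure (OneSided A)) : Prop :=
  IsProbabilityMeasure μ ∧
    ∀ (j : Fin r) (E : Set (OneSided A)), MeasurableSet E → (∀ x ∈ E, x.1 0 = j) →
      μ (shift1 '' E) = ∫⁻ x in E, ENNReal.ofReal (Real.exp (P - φ x)) ∂μ

/-- `Σ_A⁺` is transitive: some point has dense forward orbit under `σ`. -/
def Transitive1 (A : Fin r → Fin r → Prop) : Prop :=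
  ∃ x : OneSided A, Dense (Set.range fun n : ℕ => shift1^[n] x)

/-- `Σ_A⁺` is mixing with constant `M`: for all symbols `i`, `j` there is an
admissible word of length `M+1` beginning with `i` and ending with `j`. -/
def MixingWith (A : Fin r → Fin r → Prop) (M : ℕ) : Prop :=
  1 ≤ M ∧ ∀ i j : Fin r, ∃ w : Fin (M + 1) → Fin r,
    AdmissibleWord A w ∧ w 0 = i ∧ w (Fin.last M) = j

/-!
Write `L = exp P₀`. Conformality for `φ = 0` says that the shift multiplies the measure of every
Borel subset of a 1-cylinder by `L`, and it maps an `(m+2)`-cylinder onto the cylinder of its tail.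
Hence an `(m+1)`-cylinder `[u]` has measure `L⁻ᵐ μ₀[u_m]`. A 1-cylinder has measure at most `1`, and
at least `L⁻ᴹ` by mixing: the `(M+1)`-cylinders of words from `i` to `j` are disjoint subsets of
`[i]` whose measures `L⁻ᴹ μ₀[j]` add up to at least `L⁻ᴹ`. So `μ₀[v] ≤ L^{1-n}` (for `n = 0` this
uses `L ≥ 1`) and `μ₀[w] ≥ L^{-M-n}`.
-/

open Set Function

variable {A : Fin r → Fin r → Prop}

lemma measurableSet_cyl {n : ℕ} (w : Fin n → Fin r) : MeasurableSet (Cyl A w) := by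
  have : Cyl A w = ⋂ i : Fin n, (fun x : OneSided A => x.1 i) ⁻¹' {w i} := by
    ext x
    simp [Cyl]
  rw [this]
  exact .iInter fun i => (measurable_pi_apply _).comp measurable_subtype_coe
    (measurableSet_singleton _)

lemma mem_cyl_singleton {j : Fin r} {x : OneSided A} :
    x ∈ Cyl A (fun _ : Fin 1 => j) ↔ x.1 0 = j :=
  ⟨fun h => h 0, fun h i => by rw [Fin.fin_one_eq_zero i, ← h]; rfl⟩

lemma AdmissibleWord.tail {n : ℕ} {w : Fin (n + 1) → Fin r} (hw : AdmissibleWord A w) :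
    AdmissibleWord A (Fin.tail w) :=
  fun i h => hw (i + 1) (Nat.succ_lt_succ h)

lemma shift1_image_cyl {n : ℕ} {w : Fin (n + 2) → Fin r} (hw : AdmissibleWord A w) :
    shift1 '' Cyl A w = Cyl A (Fin.tail w) := by
  ext y
  constructor
  · rintro ⟨x, hx, rfl⟩ i
    exact hx i.succ
  · intro hy
    have hstart : A (w 0) (y.1 0) := by
      simpa [show y.1 0 = w 1 from hy 0] using hw 0 (by omega)
    refine ⟨⟨fun k => Nat.casesOn k (w 0) y.1, fun k => ?_⟩, fun ⟨k, hk⟩ => ?_, rfl⟩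
    · cases k with
      | zero => exact hstart
      | succ k => exact y.2 k
    · cases k with
      | zero => rfl
      | succ k => exact hy ⟨k, by omega⟩

lemma ConformalPair.measure_shift1_image_of_const {P c : ℝ} {μ : Measure (OneSided A)}
    (hμ : ConformalPair A (fun _ => c) P μ) (j : Fin r) {E : Set (OneSided A)}
    (hE : MeasurableSet E) (hEj : ∀ x ∈ E, x.1 0 = j) :
    μ (shift1 '' E) = ENNReal.ofReal (exp (P - c)) * μ E := by
  rw [hμ.2 j E hE hEj, setLIntegral_const]

section ZeroPotential

variable {P₀ : ℝ} {μ₀ : Measure (OneSided A)}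

lemma ConformalPair.measure_cyl_singleton_last (hμ₀ : ConformalPair A (fun _ => 0) P₀ μ₀) :
    ∀ (m : ℕ) (u : Fin (m + 1) → Fin r), AdmissibleWord A u →
      μ₀ (Cyl A (fun _ : Fin 1 => u (Fin.last m))) =
        ENNReal.ofReal (exp P₀) ^ m * μ₀ (Cyl A u)
  | 0, u, _ => by
    rw [pow_zero, one_mul]
    congr 2
    funext i
    exact congrArg u (Subsingleton.elim (α := Fin 1) _ _)
  | m + 1, u, hu => by
    have hshift : μ₀ (Cyl A (Fin.tail u)) = ENNReal.ofReal (exp P₀) * μ₀ (Cyl A u) := by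
      rw [← shift1_image_cyl hu, hμ₀.measure_shift1_image_of_const (u 0) (measurableSet_cyl u)
        fun _ hx => hx 0, sub_zero]
    change μ₀ (Cyl A fun _ => Fin.tail u (Fin.last m)) = _
    rw [hμ₀.measure_cyl_singleton_last m _ hu.tail, hshift, pow_succ, mul_assoc]

lemma ConformalPair.pow_mul_measure_cyl_le_one (hμ₀ : ConformalPair A (fun _ => 0) P₀ μ₀)
    {m : ℕ} {u : Fin (m + 1) → Fin r} (hu : AdmissibleWord A u) :
    ENNReal.ofReal (exp P₀) ^ m * μ₀ (Cyl A u) ≤ 1 := by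
  have := hμ₀.1
  rw [← hμ₀.measure_cyl_singleton_last m u hu]
  exact prob_le_one

lemma ConformalPair.pow_mul_measure_cyl_le (hμ₀ : ConformalPair A (fun _ => 0) P₀ μ₀)
    (hlam : 1 ≤ exp P₀) {n : ℕ} {v : Fin n → Fin r} (hv : AdmissibleWord A v) :
    ENNReal.ofReal (exp P₀) ^ n * μ₀ (Cyl A v) ≤ ENNReal.ofReal (exp P₀) := by
  have := hμ₀.1
  have hL : 1 ≤ ENNReal.ofReal (exp P₀) := by simpa using ENNReal.ofReal_le_ofReal hlam
  cases n with
  | zero =>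
    rw [pow_zero, one_mul]
    exact prob_le_one.trans hL
  | succ m =>
    rw [pow_succ', mul_assoc]
    exact mul_le_of_le_one_right' (hμ₀.pow_mul_measure_cyl_le_one hv)

lemma ConformalPair.one_le_pow_mul_measure_cyl_singleton
    (hμ₀ : ConformalPair A (fun _ => 0) P₀ μ₀) {M : ℕ} (hmix : MixingWith A M) (i : Fin r) :
    1 ≤ ENNReal.ofReal (exp P₀) ^ M * μ₀ (Cyl A (fun _ : Fin 1 => i)) := by
  have := hμ₀.1
  choose u hu hu_first hu_last using hmix.2 i
  have hdisj : Pairwise (Disjoint on fun j => Cyl A (u j)) := fun j j' hjj' =>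
    disjoint_left.2 fun x hx hx' => hjj' <| by
      rw [← hu_last j, ← hu_last j', ← hx (Fin.last M), ← hx' (Fin.last M)]
  have hcover : (univ : Set (OneSided A)) = ⋃ j, Cyl A (fun _ : Fin 1 => j) :=
    (iUnion_eq_univ_iff.2 fun x => ⟨x.1 0, mem_cyl_singleton.2 rfl⟩).symm
  have hsub : (⋃ j, Cyl A (u j)) ⊆ Cyl A (fun _ : Fin 1 => i) := iUnion_subset fun j _ hx =>
    mem_cyl_singleton.2 ((hx 0).trans (hu_first j))
  calc (1 : ℝ≥0∞) = μ₀ univ := measure_univ.symm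
    _ ≤ ∑' j, μ₀ (Cyl A (fun _ : Fin 1 => j)) := hcover ▸ measure_iUnion_le _
    _ = ∑' j, ENNReal.ofReal (exp P₀) ^ M * μ₀ (Cyl A (u j)) := tsum_congr fun j => by
      rw [← hμ₀.measure_cyl_singleton_last M _ (hu j), hu_last]
    _ = ENNReal.ofReal (exp P₀) ^ M * μ₀ (⋃ j, Cyl A (u j)) := by
      rw [ENNReal.tsum_mul_left, measure_iUnion hdisj fun j => measurableSet_cyl (u j)]
    _ ≤ ENNReal.ofReal (exp P₀) ^ M * μ₀ (Cyl A (fun _ : Fin 1 => i)) := by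
      gcongr

lemma ConformalPair.measure_cyl_le_pow_mul_measure_cyl
    (hμ₀ : ConformalPair A (fun _ => 0) P₀ μ₀) (hlam : 1 ≤ exp P₀) {M : ℕ}
    (hmix : MixingWith A M) {n : ℕ} {v : Fin n → Fin r} {w : Fin (n + 1) → Fin r}
    (hv : AdmissibleWord A v) (hw : AdmissibleWord A w) :
    μ₀ (Cyl A v) ≤ ENNReal.ofReal (exp P₀) ^ (M + 1) * μ₀ (Cyl A w) := by
  set L := ENNReal.ofReal (exp P₀)
  have hL₀ : L ^ n ≠ 0 := pow_ne_zero _ (ENNReal.ofReal_pos.2 (exp_pos P₀)).ne'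
  refine (ENNReal.mul_le_mul_iff_right hL₀ (ENNReal.pow_ne_top ENNReal.ofReal_ne_top)).1 ?_
  calc L ^ n * μ₀ (Cyl A v) ≤ L := hμ₀.pow_mul_measure_cyl_le hlam hv
    _ ≤ L * (L ^ M * μ₀ (Cyl A (fun _ : Fin 1 => w (Fin.last n)))) :=
      le_mul_of_one_le_right' (hμ₀.one_le_pow_mul_measure_cyl_singleton hmix _)
    _ = L ^ n * (L ^ (M + 1) * μ₀ (Cyl A w)) := by
      rw [hμ₀.measure_cyl_singleton_last n w hw]
      ring

end ZeroPotential

theorem cylinder_measure_bounded_ratio_general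
    {A : Fin r → Fin r → Prop} (M : ℕ) (hmix : MixingWith A M)
    (P₀ : ℝ) (μ₀ : Measure (OneSided A))
    (hpair₀ : ConformalPair A (fun _ => 0) P₀ μ₀)
    (hlam : 1 < Real.exp P₀)
    (n : ℕ) (v : Fin n → Fin r) (w : Fin (n + 1) → Fin r)
    (hv : AdmissibleWord A v) (hw : AdmissibleWord A w) :
    ENNReal.ofReal (Real.exp P₀ ^ (-((M : ℤ) + 1))) * μ₀ (Cyl A v) ≤ μ₀ (Cyl A w) := by
  have hcoeff : ENNReal.ofReal (exp P₀ ^ (-((M : ℤ) + 1))) =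
      (ENNReal.ofReal (exp P₀) ^ (M + 1))⁻¹ := by
    rw [← ENNReal.ofReal_pow (exp_pos P₀).le, ← ENNReal.ofReal_inv_of_pos (by positivity),
      ← zpow_natCast, ← zpow_neg]
    push_cast
    rfl
  rw [hcoeff, ENNReal.inv_mul_le_iff (by positivity) (ENNReal.pow_ne_top ENNReal.ofReal_ne_top)]
  exact hpair₀.measure_cyl_le_pow_mul_measure_cyl hlam.le hmix hv hw

/-- (Bounded ratio geometry) For the conformal measure `μ₀` of the constant
function `0` with `λ = exp P₀ > 1` on a subshift mixing with constant `M`: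
any `(n+1)`-cylinder `[w]` contained in an `n`-cylinder `[v]` satisfies
`μ₀([w]) ≥ λ^{−(M+1)} · μ₀([v])`. -/
theorem cylinder_measure_bounded_ratio
    {A : Fin r → Fin r → Prop} (M : ℕ) (hmix : MixingWith A M)
    (hcylne : ∀ (n : ℕ) (w : Fin n → Fin r), AdmissibleWord A w → (Cyl A w).Nonempty)
    (P₀ : ℝ) (μ₀ : Measure (OneSided A))
    (hpair₀ : ConformalPair A (fun _ => 0) P₀ μ₀)
    (hlam : 1 < Real.exp P₀)
    (n : ℕ) (v : Fin n → Fin r) (w : Fin (n + 1) → Fin r)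
    (hv : AdmissibleWord A v) (hw : AdmissibleWord A w)
    (hsub : Cyl A w ⊆ Cyl A v) :
    ENNReal.ofReal (Real.exp P₀ ^ (-((M : ℤ) + 1))) * μ₀ (Cyl A v) ≤ μ₀ (Cyl A w) :=
  cylinder_measure_bounded_ratio_general M hmix P₀ μ₀ hpair₀ hlam n v w hv hw
end
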